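/- arXiv:1501.06353 — 5 statements merged into one kernel-verified Lean document; each statement's English description precedes it below -/
import Mathlib

section
/- (Lemma A.3 of the paper, base case n = 3.) Let i, j ∈ V with (j, i) ∈ A, and suppose W₃ = {i, j, k} (with k ∉ {i, j}) is obtained from the pair {i, j} by one exact generation step. Then there exists X ⊆ V with W₃ ⊆ X such that D[X] is a directed sub-block, the vertex i is reachable in D[W₃] from every other vertex of W₃, and i is reachable in D[X] from every other vertex of X. -/
/-!
Let `k → j'` be the generating arc and `y` the other vertex of the pair. Since `{j'}` is not
dynamically partitioning, some vertex reaches both `k` and `y` avoiding `j'`. Cutting these two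
paths at their last common vertex `x` leaves paths `x ⇝ k` and `x ⇝ y` meeting only at `x`;
together with `j'`, adjacent to both `k` and `y`, they form a cycle, and the vertex set of a cycle
is biconnected. Inside this cycle every vertex reaches `k`, `j'` or `y` along its path, and each
of these reaches `i` through the arcs `k → j'` and `j → i`.
-/

open Set

variable {V : Type*}

/-- One arc step within the induced subgraph on the vertex set `S`. -/
def StepIn (A : V → V → Prop) (S : Set V) (u v : V) : Prop :=
  u ∈ S ∧ v ∈ S ∧ A u v

/-- `v` is reachable from `u` by a directed path in the induced subgraph on `S`
(every vertex is reachable from itself, provided it lies in `S`). -/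
def ReachIn (A : V → V → Prop) (S : Set V) (u v : V) : Prop :=
  u ∈ S ∧ Relation.ReflTransGen (StepIn A S) u v

/-- `IN(X)`: the set of vertices from which some member of `X` is reachable,
computed in the induced subgraph on `S`. -/
def InSet (A : V → V → Prop) (S : Set V) (X : Set V) : Set V :=
  {u | ∃ x ∈ X, ReachIn A S u x}

/-- `Z` is dynamically partitioning with respect to `X` and `Y`:
`IN(X) ∩ IN(Y) = ∅` computed in the induced subgraph `D − Z`. -/
def DynPart (A : V → V → Prop) (X Y Z : Set V) : Prop :=
  InSet A Zᶜ X ∩ InSet A Zᶜ Y = ∅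

/-- `StepsLe r n u v`: `v` can be reached from `u` in at most `n` `r`-steps. -/
def StepsLe (r : V → V → Prop) : ℕ → V → V → Prop
  | 0, u, v => u = v
  | n + 1, u, v => u = v ∨ ∃ w, r u w ∧ StepsLe r n w v

/-- `v` is reachable from `u` by a directed path using at most `n` arcs
in the induced subgraph on `S`. -/
def ReachInLe (A : V → V → Prop) (S : Set V) (n : ℕ) (u v : V) : Prop :=
  u ∈ S ∧ StepsLe (StepIn A S) n u v

/-- `IN_a(X)` computed in the induced subgraph on `S`. -/
def InSetLe (A : V → V → Prop) (S : Set V) (a : ℕ) (X : Set V) : Set V :=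
  {u | ∃ x ∈ X, ReachInLe A S a u x}

/-- The vertex `i` is cycle-partitioning at order `x` with respect to `X` and `Y`:
`IN_a(X) ∩ IN_b(Y) = ∅` in `D − {i}` for all `a + b = x`. -/
def CyclePart (A : V → V → Prop) (X Y : Set V) (i : V) (x : ℕ) : Prop :=
  ∀ a b : ℕ, a + b = x → InSetLe A {i}ᶜ a X ∩ InSetLe A {i}ᶜ b Y = ∅

/-- One adjacency step of the underlying (simple) graph of `D[W]`. -/
def UStep (A : V → V → Prop) (W : Set V) (u v : V) : Prop :=
  u ∈ W ∧ v ∈ W ∧ u ≠ v ∧ (A u v ∨ A v u)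

/-- The underlying graph of `D[W]` is connected. -/
def UConnected (A : V → V → Prop) (W : Set V) : Prop :=
  W.Nonempty ∧ ∀ u ∈ W, ∀ v ∈ W, Relation.ReflTransGen (UStep A W) u v

/-- The underlying graph of `D[W]` is biconnected: at least 3 vertices, connected,
and deleting any single vertex leaves a connected graph. -/
def Biconnected (A : V → V → Prop) (W : Set V) : Prop :=
  3 ≤ W.ncard ∧ UConnected A W ∧ ∀ v ∈ W, UConnected A (W \ {v})

/-- `D[W]` is a directed sub-block: some vertex of `W` is reachable in `D[W]` from
every other vertex of `W`, and the underlying graph of `D[W]` is biconnected. -/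
def DirectedSubBlock (A : V → V → Prop) (W : Set V) : Prop :=
  (∃ i ∈ W, ∀ j ∈ W, ReachIn A W j i) ∧ Biconnected A W

/-- A directed sub-block is a transmission block iff it is maximal. -/
def TransmissionBlock (A : V → V → Prop) (W : Set V) : Prop :=
  DirectedSubBlock A W ∧ ∀ U : Set V, W ⊂ U → ¬ DirectedSubBlock A U

/-- A connected pair: a two-element set `{i, j}` with an arc between `i` and `j`. -/
def ConnectedPair (A : V → V → Prop) (W : Set V) : Prop :=
  ∃ i j : V, i ≠ j ∧ W = {i, j} ∧ (A i j ∨ A j i)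

/-- `W'` is obtained from `W` by one exact generation step. -/
def ExactStep (A : V → V → Prop) (W W' : Set V) : Prop :=
  ∃ k, k ∉ W ∧ W' = W ∪ {k} ∧ ∃ j ∈ W, A k j ∧ ¬ DynPart A {k} (W \ {j}) {j}

/-- `W` is the last term of a finite chain of exact generation steps whose
first term is a connected pair. -/
def GeneratedFromPair (A : V → V → Prop) (W : Set V) : Prop :=
  ∃ P : Set V, ConnectedPair A P ∧ Relation.ReflTransGen (ExactStep A) P W

/-- `W'` is obtained from `W` by one order-`x` cycle generation step. -/
def CycleStep (A : V → V → Prop) (x : ℕ) (W W' : Set V) : Prop :=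
  ∃ k, k ∉ W ∧ W' = W ∪ {k} ∧ ∃ j ∈ W, A k j ∧ ¬ CyclePart A {k} (W \ {j}) j x

/-- `W` is the last term of a finite chain of order-`x` cycle generation steps
whose first term is a connected pair. -/
def XGenerable (A : V → V → Prop) (x : ℕ) (W : Set V) : Prop :=
  ∃ P : Set V, ConnectedPair A P ∧ Relation.ReflTransGen (CycleStep A x) P W

namespace List

variable {α : Type*}

theorem exists_cons_suffix_forall_not {p : α → Prop} {l : List α} (h : ∃ x ∈ l, p x) :
    ∃ x t, x :: t <:+ l ∧ p x ∧ ∀ y ∈ t, ¬ p y := by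
  induction l with
  | nil => simp at h
  | cons a l ih =>
    by_cases hl : ∃ x ∈ l, p x
    · obtain ⟨x, t, hsuf, hx, ht⟩ := ih hl
      exact ⟨x, t, hsuf.trans (suffix_cons a l), hx, ht⟩
    · push Not at hl
      have ha : p a := by
        obtain ⟨x, hx, hpx⟩ := h
        rcases mem_cons.1 hx with rfl | hx
        exacts [hpx, absurd hpx (hl x hx)]
      exact ⟨a, l, suffix_refl _, ha, hl⟩

theorem exists_nodup_isChain_cons_of_relationReflTransGen {r : α → α → Prop} {a b : α}
    (h : Relation.ReflTransGen r a b) :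
    ∃ l, IsChain r (a :: l) ∧ getLast (a :: l) (cons_ne_nil _ _) = b ∧ (a :: l).Nodup := by
  induction h using Relation.ReflTransGen.head_induction_on with
  | refl => exact ⟨[], .singleton _, rfl, nodup_singleton _⟩
  | @head c d hcd _ ih =>
    obtain ⟨l, hchain, hlast, hnd⟩ := ih
    by_cases hc : c ∈ d :: l
    · obtain ⟨s, t, hst⟩ := append_of_mem hc
      have hsuf : c :: t <:+ d :: l := ⟨s, hst.symm⟩
      exact ⟨t, hchain.suffix hsuf, (hsuf.getLast _).trans hlast, hnd.sublist hsuf.sublist⟩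
    · exact ⟨d :: l, hchain.cons_cons hcd, by rwa [getLast_cons_cons],
        nodup_cons.2 ⟨hc, hnd⟩⟩

theorem Nodup.ncard_setOf_mem {l : List α} (hl : l.Nodup) : {x | x ∈ l}.ncard = l.length := by
  classical
  rw [show {x | x ∈ l} = (l.toFinset : Set α) by ext; simp, Set.ncard_coe_finset,
    toFinset_card_of_nodup hl]

end List

theorem Cycle.exists_isChain_cons_of_mem {α : Type*} {r : α → α → Prop} {c : List α}
    (hc : Cycle.Chain r (c : Cycle α)) {v : α} (hv : v ∈ c) :
    ∃ t, c ~r v :: t ∧ List.IsChain r (v :: (t ++ [v])) := by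
  obtain ⟨s, t, rfl⟩ := List.append_of_mem hv
  have hrot : s ++ v :: t ~r v :: (t ++ s) := by
    simpa using List.isRotated_append (l := s) (l' := v :: t)
  rw [Cycle.coe_eq_coe.2 hrot, Cycle.chain_coe_cons] at hc
  exact ⟨t ++ s, hrot, hc⟩

section Graph

variable {A : V → V → Prop}

instance (W : Set V) : Std.Symm (UStep A W) :=
  ⟨fun _ _ ⟨hu, hv, hne, hA⟩ => ⟨hv, hu, hne.symm, hA.symm⟩⟩

theorem uConnected_of_isChain {l : List V} (hne : l ≠ [])
    (h : l.IsChain (SimpleGraph.fromRel A).Adj) : UConnected A {v | v ∈ l} := by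
  have hstep : l.IsChain (UStep A {v | v ∈ l}) :=
    h.imp_of_mem_imp fun _ _ ha hb hab => ⟨ha, hb, hab⟩
  have hhead : ∀ v ∈ l, Relation.ReflTransGen (UStep A {v | v ∈ l}) (l.head hne) v :=
    hstep.induction _ l (fun _ _ hxy hx => hx.tail hxy) (fun _ => .refl)
  exact ⟨⟨_, l.head_mem hne⟩, fun u hu v hv => (symm_of _ (hhead u hu)).trans (hhead v hv)⟩

theorem biconnected_of_cycle {c : List V}
    (hc : Cycle.Chain (SimpleGraph.fromRel A).Adj (c : Cycle V)) (hnd : c.Nodup)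
    (h3 : 3 ≤ c.length) : Biconnected A {v | v ∈ c} := by
  refine ⟨?_, ?_, fun v hv => ?_⟩
  · rwa [hnd.ncard_setOf_mem]
  · obtain ⟨v, t, rfl⟩ :=
      List.exists_cons_of_ne_nil (List.ne_nil_of_length_pos (by omega : 0 < c.length))
    rw [Cycle.chain_coe_cons, ← List.cons_append] at hc
    exact uConnected_of_isChain (List.cons_ne_nil _ _) hc.left_of_append
  · obtain ⟨t, hrot, hchain⟩ := Cycle.exists_isChain_cons_of_mem hc hv
    have hvt : v ∉ t := (List.nodup_cons.1 (hrot.nodup_iff.1 hnd)).1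
    have ht : t ≠ [] := by
      rintro rfl
      have := hrot.perm.length_eq
      simp at this
      omega
    have hset : {x | x ∈ c} \ {v} = {x | x ∈ t} := by
      ext x
      simp only [Set.mem_sdiff, Set.mem_ofPred_eq, Set.mem_singleton_iff, hrot.mem_iff,
        List.mem_cons]
      exact ⟨fun ⟨h, hxv⟩ => h.resolve_left hxv,
        fun h => ⟨Or.inr h, by rintro rfl; exact hvt h⟩⟩
    rw [hset]
    exact uConnected_of_isChain ht hchain.tail.left_of_append

/-- `a :: l` is the vertex sequence of a directed path from `a` to `b` without repeated
vertices. -/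
def IsDirPath (A : V → V → Prop) (a : V) (l : List V) (b : V) : Prop :=
  (a :: l).IsChain A ∧ (a :: l).getLast (List.cons_ne_nil a l) = b ∧ (a :: l).Nodup

theorem IsDirPath.suffix {a b x : V} {l t : List V} (h : IsDirPath A a l b)
    (hsuf : x :: t <:+ a :: l) : IsDirPath A x t b :=
  ⟨h.1.suffix hsuf, (hsuf.getLast _).trans h.2.1, h.2.2.sublist hsuf.sublist⟩

theorem ReachIn.exists_isDirPath {S : Set V} {u v : V} (h : ReachIn A S u v) :
    ∃ l, IsDirPath A u l v ∧ ∀ x ∈ u :: l, x ∈ S := by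
  obtain ⟨l, hchain, hlast, hnd⟩ := List.exists_nodup_isChain_cons_of_relationReflTransGen h.2
  exact ⟨l, ⟨hchain.imp fun _ _ hxy => hxy.2.2, hlast, hnd⟩,
    hchain.induction (· ∈ S) _ (fun _ _ hxy _ => hxy.2.1) fun _ => h.1⟩

theorem ReachIn.trans {S : Set V} {u v w : V} (huv : ReachIn A S u v)
    (hvw : ReachIn A S v w) : ReachIn A S u w :=
  ⟨huv.1, huv.2.trans hvw.2⟩

theorem IsDirPath.reachIn {X : Set V} {a b : V} {l : List V} (h : IsDirPath A a l b)
    (hX : ∀ x ∈ a :: l, x ∈ X) : ∀ v ∈ a :: l, ReachIn A X v b := by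
  have hchain : (a :: l).IsChain (StepIn A X) :=
    h.1.imp_of_mem_imp fun _ _ hx hy hxy => ⟨hX _ hx, hX _ hy, hxy⟩
  refine hchain.backwards_cons_induction _ l h.2.1
    (fun _ _ hxy hy => ⟨hxy.1, .head hxy hy.2⟩) ?_
  exact ⟨hX b (h.2.1 ▸ List.getLast_mem _), .refl⟩

theorem IsDirPath.exists_fork {u a b : V} {p q : List V} (hp : IsDirPath A u p a)
    (hq : IsDirPath A u q b) :
    ∃ x p' q', IsDirPath A x p' a ∧ IsDirPath A x q' b ∧
      x :: p' ⊆ u :: p ∧ x :: q' ⊆ u :: q ∧ ∀ y ∈ p', y ∉ x :: q' := by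
  obtain ⟨x, p', hsufp, hxq, hdisj⟩ :=
    List.exists_cons_suffix_forall_not (p := (· ∈ u :: q))
      ⟨u, List.mem_cons_self, List.mem_cons_self⟩
  obtain ⟨s, q', hsq⟩ := List.append_of_mem hxq
  have hsufq : x :: q' <:+ u :: q := ⟨s, hsq.symm⟩
  exact ⟨x, p', q', hp.suffix hsufp, hq.suffix hsufq, hsufp.subset, hsufq.subset,
    fun y hy hyq => hdisj y hy (hsufq.subset hyq)⟩

theorem fromRel_adj_of_irrefl (hirr : ∀ v, ¬ A v v) {u v : V} (h : A u v) :
    (SimpleGraph.fromRel A).Adj u v :=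
  ⟨fun huv => hirr u (huv ▸ h), Or.inl h⟩

/-- `x :: (p ++ m :: q.reverse)` runs around the cycle `x ⇝ a — m — b ⇜ x`. -/
theorem biconnected_of_fork (hirr : ∀ v, ¬ A v v) {x a b m : V} {p q : List V}
    (hp : IsDirPath A x p a) (hq : IsDirPath A x q b) (hdisj : ∀ y ∈ p, y ∉ x :: q)
    (hmp : m ∉ x :: p) (hmq : m ∉ x :: q) (hab : a ≠ b)
    (ham : (SimpleGraph.fromRel A).Adj a m) (hbm : (SimpleGraph.fromRel A).Adj b m) :
    Biconnected A {v | v ∈ x :: (p ++ m :: q.reverse)} := by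
  set G := SimpleGraph.fromRel A
  have hpG : (x :: p).IsChain G.Adj := hp.1.imp fun _ _ => fromRel_adj_of_irrefl hirr
  have hqG : (x :: q).reverse.IsChain G.Adj :=
    List.isChain_reverse.2 (hq.1.imp fun _ _ h => (fromRel_adj_of_irrefl hirr h).symm)
  have hcycle : Cycle.Chain G.Adj (x :: (p ++ m :: q.reverse) : List V) := by
    rw [Cycle.chain_coe_cons,
      show x :: (p ++ m :: q.reverse ++ [x]) = (x :: p) ++ m :: (x :: q).reverse by simp]
    refine hpG.append (List.isChain_cons.2 ⟨?_, hqG⟩) ?_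
    · simp only [List.head?_reverse, List.getLast?_eq_some_getLast (List.cons_ne_nil x q),
        hq.2.1, Option.mem_some_iff, forall_eq']
      exact hbm.symm
    · simp only [List.getLast?_eq_some_getLast (List.cons_ne_nil x p), hp.2.1,
        Option.mem_some_iff, List.head?_cons, forall_eq']
      exact ham
  refine biconnected_of_cycle hcycle ?_ ?_
  · have hxp := hp.2.2
    have hxq := hq.2.2
    simp only [List.nodup_cons, List.mem_cons, not_or] at hxp hxq hmp hmq hdisj
    simp only [List.nodup_cons, List.nodup_append, List.mem_append, List.mem_cons,
      List.mem_reverse, List.nodup_reverse, not_or]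
    grind
  · have hpq : p ≠ [] ∨ q ≠ [] := by
      by_contra! h
      obtain ⟨rfl, rfl⟩ := h
      exact hab (hp.2.1.symm.trans hq.2.1)
    simp only [List.length_cons, List.length_append, List.length_reverse]
    rcases hpq with h | h <;> have := List.length_pos_of_ne_nil h <;> omega

theorem exists_biconnected_of_reachIn_compl (hirr : ∀ v, ¬ A v v) {u a b m : V} (hab : a ≠ b)
    (ha : ReachIn A {m}ᶜ u a) (hb : ReachIn A {m}ᶜ u b) (ham : (SimpleGraph.fromRel A).Adj a m)
    (hbm : (SimpleGraph.fromRel A).Adj b m) :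
    ∃ X : Set V, a ∈ X ∧ b ∈ X ∧ m ∈ X ∧ Biconnected A X ∧
      ∀ v ∈ X, ReachIn A X v a ∨ v = m ∨ ReachIn A X v b := by
  obtain ⟨p, hp, hpm⟩ := ha.exists_isDirPath
  obtain ⟨q, hq, hqm⟩ := hb.exists_isDirPath
  obtain ⟨x, p', q', hp', hq', hsubp, hsubq, hdisj⟩ := hp.exists_fork hq
  have hmp : m ∉ x :: p' := fun h => hpm m (hsubp h) rfl
  have hmq : m ∉ x :: q' := fun h => hqm m (hsubq h) rfl
  set X : Set V := {v | v ∈ x :: (p' ++ m :: q'.reverse)}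
  have hmem : ∀ v, v ∈ X ↔ v ∈ x :: p' ∨ v = m ∨ v ∈ x :: q' := by
    intro v; simp only [X, Set.mem_ofPred_eq, List.mem_cons, List.mem_append, List.mem_reverse]
    tauto
  have hpX : ∀ v ∈ x :: p', v ∈ X := fun v hv => (hmem v).2 (.inl hv)
  have hqX : ∀ v ∈ x :: q', v ∈ X := fun v hv => (hmem v).2 (.inr (.inr hv))
  refine ⟨X, hpX a (hp'.2.1 ▸ List.getLast_mem _), hqX b (hq'.2.1 ▸ List.getLast_mem _),
    (hmem m).2 (.inr (.inl rfl)), biconnected_of_fork hirr hp' hq' hdisj hmp hmq hab ham hbm,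
    fun v hv => ?_⟩
  rcases (hmem v).1 hv with hv | hv | hv
  exacts [.inl (hp'.reachIn hpX v hv), .inr (.inl hv), .inr (.inr (hq'.reachIn hqX v hv))]

theorem ExactStep.exists_of_pair {i j k : V} (hk : k ∉ ({i, j} : Set V))
    (hstep : ExactStep A {i, j} {i, j, k}) :
    ∃ j' y u, ((j' = i ∧ y = j) ∨ (j' = j ∧ y = i)) ∧ A k j' ∧
      ReachIn A {j'}ᶜ u k ∧ ReachIn A {j'}ᶜ u y := by
  obtain ⟨k', hk', hW, j', hj', hkj', hndp⟩ := hstep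
  obtain rfl : k = k' := by
    have : k ∈ ({i, j} : Set V) ∪ {k'} := hW ▸ by simp
    exact this.resolve_left hk
  obtain ⟨u, ⟨_, hxk, huk⟩, y, hy, huy⟩ := Set.nonempty_iff_ne_empty.2 hndp
  rw [Set.mem_singleton_iff.1 hxk] at huk
  refine ⟨j', y, u, ?_, hkj', huk, huy⟩
  simp only [Set.mem_sdiff, Set.mem_insert_iff, Set.mem_singleton_iff] at hj' hy
  grind

theorem reachIn_of_mem_triple {X : Set V} {i j k j' : V}
    (hX : {i, j, k} ⊆ X) (hji : A j i) (hkj' : A k j') (hj' : j' = i ∨ j' = j) :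
    ∀ v ∈ ({i, j, k} : Set V), ReachIn A X v i := by
  simp only [Set.insert_subset_iff, Set.singleton_subset_iff] at hX
  obtain ⟨hiX, hjX, hkX⟩ := hX
  have hji' : ReachIn A X j i := ⟨hjX, .single ⟨hjX, hiX, hji⟩⟩
  have hki' : ReachIn A X k i := by
    rcases hj' with rfl | rfl
    exacts [⟨hkX, .single ⟨hkX, hiX, hkj'⟩⟩, ⟨hkX, .head ⟨hkX, hjX, hkj'⟩ hji'.2⟩]
  rintro v (rfl | rfl | rfl)
  exacts [⟨hiX, .refl⟩, hji', hki']

end Graph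

theorem stmt5_general (A : V → V → Prop) (hirr : ∀ v : V, ¬ A v v)
    (i j k : V) (hji : A j i) (hk : k ∉ ({i, j} : Set V))
    (hstep : ExactStep A {i, j} {i, j, k}) :
    ∃ X : Set V, ({i, j, k} : Set V) ⊆ X ∧ DirectedSubBlock A X ∧
      (∀ v ∈ ({i, j, k} : Set V), ReachIn A {i, j, k} v i) ∧
      (∀ v ∈ X, ReachIn A X v i) := by
  obtain ⟨j', y, u, hpair, hkj', huk, huy⟩ := hstep.exists_of_pair hk
  have hyj' : (SimpleGraph.fromRel A).Adj y j' := by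
    rcases hpair with ⟨rfl, rfl⟩ | ⟨rfl, rfl⟩
    exacts [fromRel_adj_of_irrefl hirr hji, (fromRel_adj_of_irrefl hirr hji).symm]
  have hky : k ≠ y := by
    rintro rfl
    rcases hpair with ⟨-, rfl⟩ | ⟨-, rfl⟩ <;> simp at hk
  obtain ⟨X, hkX, hyX, hj'X, hbic, hX⟩ := exists_biconnected_of_reachIn_compl hirr hky huk huy
    (fromRel_adj_of_irrefl hirr hkj') hyj'
  have hsub : {i, j, k} ⊆ X := by
    rcases hpair with ⟨rfl, rfl⟩ | ⟨rfl, rfl⟩ <;> simp [Set.insert_subset_iff, *]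
  have hj' : j' = i ∨ j' = j := hpair.imp And.left And.left
  have htriple := reachIn_of_mem_triple hsub hji hkj' hj'
  have hXi : ∀ v ∈ X, ReachIn A X v i := by
    intro v hv
    rcases hX v hv with h | rfl | h
    · exact h.trans (htriple k (by simp))
    · exact htriple v (by rcases hpair with ⟨rfl, -⟩ | ⟨rfl, -⟩ <;> simp)
    · exact h.trans (htriple y (by rcases hpair with ⟨-, rfl⟩ | ⟨-, rfl⟩ <;> simp))
  exact ⟨X, hsub, ⟨⟨i, hsub (by simp), hXi⟩, hbic⟩,
    reachIn_of_mem_triple subset_rfl hji hkj' hj', hXi⟩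

/-- Lemma A.3, base case n = 3. -/
theorem stmt5 [Fintype V] (A : V → V → Prop) (hirr : ∀ v : V, ¬ A v v)
    (i j k : V) (hij : i ≠ j) (hji : A j i) (hk : k ∉ ({i, j} : Set V))
    (hstep : ExactStep A {i, j} {i, j, k}) :
    ∃ X : Set V, ({i, j, k} : Set V) ⊆ X ∧ DirectedSubBlock A X ∧
      (∀ v ∈ ({i, j, k} : Set V), ReachIn A {i, j, k} v i) ∧
      (∀ v ∈ X, ReachIn A X v i) :=
  stmt5_general A hirr i j k hji hk hstep
end

section
/- (Corollary A.1 of the paper.) If W ⊆ V with |W| ≥ 3 can be generated from a connected pair, then there exists X ⊆ V with W ⊆ X such that D[X] is a directed sub-block. -/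
open Set

variable {V : Type*}

/-!
Grow `W` along its generating chain inside a vertex set `X` that is *nonseparable* (its
underlying graph is 2-connected or a single edge) and *rooted* (some vertex of `X` is reached
from all of `X` inside `D[X]`); a connected pair is such a set. In an exact step adding `k` with
`k → j`, the failure of `j` to be dynamically partitioning yields a vertex `u` with directed
paths to `k` and to some `w ∈ W ∖ {j}`, both avoiding `j`. Following the first one backwards from
`k` until it meets the second, and then the second forwards, gives a path
`j ← k ← ⋯ ← x → ⋯ → w` with both ends in `X`. Adding such a path keeps `X` nonseparable, and
each new vertex reaches `j` or `w` along it, so `X` stays rooted. In the end `|X| ≥ |W| ≥ 3`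
turns `D[X]` into a directed sub-block.
-/

open SimpleGraph Relation

def Nonseparable (A : V → V → Prop) (X : Set V) : Prop :=
  2 ≤ X.ncard ∧ UConnected A X ∧ ∀ v ∈ X, UConnected A (X \ {v})

def Rooted (A : V → V → Prop) (X : Set V) : Prop :=
  ∃ i ∈ X, ∀ j ∈ X, ReachIn A X j i

def FollowsArcs (R : V → V → Prop) {G : SimpleGraph V} {u v : V} (p : G.Walk u v) : Prop :=
  ∀ d ∈ p.darts, R d.fst d.snd

namespace SimpleGraph.Walk

variable {G : SimpleGraph V}

theorem exists_eq_append_first_mem {T : Set V} {u v : V} (p : G.Walk u v) (hv : v ∈ T) :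
    ∃ x ∈ T, ∃ (q : G.Walk u x) (r : G.Walk x v), p = q.append r ∧
      ∀ y ∈ q.support, y ∈ T → y = x := by
  induction p with
  | nil => exact ⟨_, hv, nil, nil, rfl, by simp⟩
  | @cons u w v h p ih =>
    by_cases hu : u ∈ T
    · exact ⟨u, hu, nil, cons h p, rfl, by simp⟩
    obtain ⟨x, hx, q, r, rfl, hq⟩ := ih hv
    refine ⟨x, hx, cons h q, r, rfl, fun y hy hyT => ?_⟩
    rcases List.mem_cons.1 (support_cons h q ▸ hy) with rfl | hy
    exacts [absurd hyT hu, hq y hy hyT]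

theorem IsPath.append_of_support_inter {u v w : V} {p : G.Walk u v} {q : G.Walk v w}
    (hp : p.IsPath) (hq : q.IsPath) (hpq : ∀ y ∈ p.support, y ∈ q.support → y = v) :
    (p.append q).IsPath := by
  have hq' := hq.support_nodup
  rw [← cons_tail_support q, List.nodup_cons] at hq'
  rw [isPath_def, support_append, List.nodup_append]
  refine ⟨hp.support_nodup, hq'.2, fun y hy y' hy' hyy' => ?_⟩
  subst hyy'
  exact hq'.1 (hpq y hy (List.mem_of_mem_tail hy') ▸ hy')

end SimpleGraph.Walk

section FollowsArcs

variable {G : SimpleGraph V} {R : V → V → Prop} {u v : V}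

theorem FollowsArcs.mono {p : G.Walk u v} {u' v' : V} {p' : G.Walk u' v'}
    (hp : FollowsArcs R p) (h : p'.darts ⊆ p.darts) : FollowsArcs R p' :=
  fun d hd => hp d (h hd)

theorem followsArcs_reverse {p : G.Walk u v} :
    FollowsArcs R p.reverse ↔ FollowsArcs (flip R) p := by
  simp only [FollowsArcs, Walk.darts_reverse, List.mem_reverse, List.mem_map]
  constructor
  · exact fun h d hd => h d.symm ⟨d, hd, rfl⟩
  · rintro h _ ⟨d, hd, rfl⟩
    exact h d hd

theorem FollowsArcs.reflTransGen_end {p : G.Walk u v} {T : Set V} (hp : FollowsArcs R p)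
    (hT : ∀ x ∈ p.support, x ∈ T) :
    ∀ y ∈ p.support, ReflTransGen (StepIn R T) y v := by
  induction p with
  | nil =>
    intro y hy
    rw [Walk.support_nil, List.mem_singleton] at hy
    exact hy ▸ .refl
  | @cons a b c h q ih =>
    have hq : FollowsArcs R q := hp.mono (by simp)
    have hqT : ∀ x ∈ q.support, x ∈ T := fun x hx => hT x (by simp [hx])
    intro y hy
    rcases List.mem_cons.1 (Walk.support_cons h q ▸ hy) with rfl | hy
    · exact .head ⟨hT _ (by simp), hqT _ q.start_mem_support, hp ⟨(_, _), h⟩ (by simp)⟩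
        (ih hq hqT _ q.start_mem_support)
    · exact ih hq hqT y hy

theorem FollowsArcs.reflTransGen_start {p : G.Walk u v} {T : Set V}
    (hp : FollowsArcs (flip R) p) (hT : ∀ x ∈ p.support, x ∈ T) :
    ∀ y ∈ p.support, ReflTransGen (StepIn R T) y u := by
  intro y hy
  exact (followsArcs_reverse.2 hp).reflTransGen_end (fun x hx => hT x (by simpa using hx)) y
    (by simpa using hy)

end FollowsArcs

section Reachability

variable {A : V → V → Prop} {S : Set V} {u v : V}

theorem ReachIn.exists_isPath (h : ReachIn A S u v) :
    ∃ p : (fromRel A).Walk u v, p.IsPath ∧ FollowsArcs A p ∧ ∀ x ∈ p.support, x ∈ S := by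
  classical
  suffices ∃ p : (fromRel A).Walk u v, FollowsArcs A p ∧ ∀ x ∈ p.support, x ∈ S by
    obtain ⟨p, hpA, hpS⟩ := this
    exact ⟨p.bypass, p.bypass_isPath, hpA.mono p.darts_bypass_subset_darts,
      fun x hx => hpS x (p.support_bypass_subset_support hx)⟩
  obtain ⟨hu, h⟩ := h
  induction h using ReflTransGen.head_induction_on with
  | refl => exact ⟨.nil, by simp [FollowsArcs], by simpa using hu⟩
  | @head a b hab _ ih =>
    obtain ⟨p, hpA, hpS⟩ := ih hab.2.1
    by_cases hab' : a = b
    · subst hab'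
      exact ⟨p, hpA, hpS⟩
    refine ⟨.cons ⟨hab', .inl hab.2.2⟩ p, ?_, ?_⟩
    · intro d hd
      rcases List.mem_cons.1 hd with rfl | hd
      exacts [hab.2.2, hpA d hd]
    · intro x hx
      rcases List.mem_cons.1 hx with rfl | hx
      exacts [hu, hpS x hx]

end Reachability

section Nonseparable

variable {A : V → V → Prop} {X Y : Set V} {u v : V}

theorem UStep.symm (h : UStep A X u v) : UStep A X v u :=
  ⟨h.2.1, h.1, h.2.2.1.symm, h.2.2.2.symm⟩

theorem reflTransGen_uStep_mono (hXY : X ⊆ Y) (h : ReflTransGen (UStep A X) u v) :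
    ReflTransGen (UStep A Y) u v :=
  ReflTransGen.mono (fun _ _ hab => ⟨hXY hab.1, hXY hab.2.1, hab.2.2⟩) _ _ h

theorem reflTransGen_uStep_of_walk (p : (fromRel A).Walk u v) (hp : ∀ x ∈ p.support, x ∈ X) :
    ReflTransGen (UStep A X) u v := by
  induction p with
  | nil => rfl
  | @cons a b c h q ih =>
    exact .head ⟨hp a (by simp), hp b (by simp), h⟩ (ih fun x hx => hp x (by simp [hx]))

theorem uConnected_of_forall_reflTransGen {x₀ : V} (hx₀ : x₀ ∈ X)
    (h : ∀ u ∈ X, ReflTransGen (UStep A X) u x₀) : UConnected A X :=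
  ⟨⟨x₀, hx₀⟩, fun u hu v hv =>
    (h u hu).trans (ReflTransGen.mono (fun _ _ => UStep.symm) _ _ (h v hv).swap)⟩

theorem Nonseparable.finite (hX : Nonseparable A X) : X.Finite :=
  Set.finite_of_ncard_pos (by have := hX.1; omega)

theorem Nonseparable.uConnected_sdiff (hX : Nonseparable A X) (v : V) :
    UConnected A (X \ {v}) := by
  by_cases hv : v ∈ X
  · exact hX.2.2 v hv
  · rw [Set.sdiff_singleton_eq_self hv]
    exact hX.2.1

theorem Nonseparable.union (hX : Nonseparable A X) (hY : Y.Finite)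
    (hattach : ∀ y ∈ Y, y ∉ X → ∀ v, y ≠ v →
      ∃ x ∈ X, x ≠ v ∧ ReflTransGen (UStep A ((X ∪ Y) \ {v})) y x) :
    Nonseparable A (X ∪ Y) := by
  have hdel : ∀ v, ∀ x₀ ∈ X, x₀ ≠ v → ∀ u ∈ (X ∪ Y) \ {v},
      ReflTransGen (UStep A ((X ∪ Y) \ {v})) u x₀ := by
    intro v x₀ hx₀ hx₀v u hu
    have hXv : X \ {v} ⊆ (X ∪ Y) \ {v} := Set.sdiff_subset_sdiff_left Set.subset_union_left
    have hX₀ : ∀ x ∈ X, x ≠ v → ReflTransGen (UStep A ((X ∪ Y) \ {v})) x x₀ := fun x hx hxv =>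
      reflTransGen_uStep_mono hXv ((hX.uConnected_sdiff v).2 x ⟨hx, hxv⟩ x₀ ⟨hx₀, hx₀v⟩)
    by_cases huX : u ∈ X
    · exact hX₀ u huX hu.2
    · obtain ⟨x, hx, hxv, hux⟩ := hattach u (hu.1.resolve_left huX) huX v hu.2
      exact hux.trans (hX₀ x hx hxv)
  obtain ⟨x₀, hx₀⟩ := hX.2.1.1
  obtain ⟨v, hv, hvx₀⟩ := Set.exists_ne_of_one_lt_ncard hX.1 x₀
  refine ⟨hX.1.trans (Set.ncard_le_ncard Set.subset_union_left (hX.finite.union hY)),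
    uConnected_of_forall_reflTransGen (Or.inl hx₀) fun u hu => ?_, fun v _ => ?_⟩
  · by_cases huv : u = v
    · subst huv
      exact reflTransGen_uStep_mono Set.subset_union_left (hX.2.1.2 u hv x₀ hx₀)
    · exact reflTransGen_uStep_mono Set.sdiff_subset
        (hdel v x₀ hx₀ (Ne.symm hvx₀) u ⟨hu, huv⟩)
  · obtain ⟨x₀, hx₀, hx₀v⟩ := Set.exists_ne_of_one_lt_ncard hX.1 v
    exact uConnected_of_forall_reflTransGen ⟨Or.inl hx₀, hx₀v⟩ (hdel v x₀ hx₀ hx₀v)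

theorem Nonseparable.union_support {a b : V} (hX : Nonseparable A X) (ha : a ∈ X) (hb : b ∈ X)
    (p : (fromRel A).Walk a b) (hp : p.IsPath) : Nonseparable A (X ∪ {y | y ∈ p.support}) := by
  refine hX.union p.support.finite_toSet fun y hy _ v hyv => ?_
  -- the two halves of the path meet only at `y`, so deleting `v ≠ y` leaves one of them intact
  obtain ⟨q, r, -, -, rfl⟩ := hp.mem_support_iff_exists_append.1 hy
  have hmem : ∀ x, x ∈ q.support ∨ x ∈ r.support → x ∈ X ∪ {y | y ∈ (q.append r).support} :=
    fun x hx => Or.inr ((Walk.mem_support_append_iff q r).2 hx)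
  by_cases hvq : v ∈ q.support
  · have hvr : v ∉ r.support := fun hvr => hp.ne_of_mem_support_of_append hyv.symm hvq hvr rfl
    exact ⟨b, hb, fun h => hvr (h ▸ r.end_mem_support),
      reflTransGen_uStep_of_walk r fun x hx => ⟨hmem x (.inr hx), fun h => hvr (h ▸ hx)⟩⟩
  · refine ⟨a, ha, fun h => hvq (h ▸ q.start_mem_support),
      reflTransGen_uStep_of_walk q.reverse fun x hx => ?_⟩
    rw [Walk.support_reverse, List.mem_reverse] at hx
    exact ⟨hmem x (.inl hx), fun h => hvq (h ▸ hx)⟩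

end Nonseparable

section Generation

variable {A : V → V → Prop} {X Y : Set V}

theorem reachIn_mono {S S' : Set V} {u v : V} (hS : S ⊆ S') (h : ReachIn A S u v) :
    ReachIn A S' u v :=
  ⟨hS h.1, ReflTransGen.mono (fun _ _ hab => ⟨hS hab.1, hS hab.2.1, hab.2.2⟩) _ _ h.2⟩

theorem Rooted.union (hX : Rooted A X)
    (hY : ∀ y ∈ Y, ∃ x ∈ X, ReflTransGen (StepIn A (X ∪ Y)) y x) : Rooted A (X ∪ Y) := by
  obtain ⟨r, hr, hXr⟩ := hX
  refine ⟨r, Or.inl hr, fun v hv => ?_⟩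
  rcases hv with hv | hv
  · exact reachIn_mono Set.subset_union_left (hXr v hv)
  · obtain ⟨x, hx, hvx⟩ := hY v hv
    exact ⟨Or.inr hv, hvx.trans (reachIn_mono Set.subset_union_left (hXr x hx)).2⟩

theorem exists_ear {j k u w : V} (hj : j ∈ X) (hw : w ∈ X) (hkj : A k j)
    (huk : ReachIn A {j}ᶜ u k) (huw : ReachIn A {j}ᶜ u w) :
    ∃ z ∈ X, ∃ e : (fromRel A).Walk j z, e.IsPath ∧ k ∈ e.support ∧
      ∀ y ∈ e.support, ∃ x ∈ X, ReflTransGen (StepIn A (X ∪ {y | y ∈ e.support})) y x := by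
  classical
  obtain ⟨P, hP, hPA, hPS⟩ := huk.exists_isPath
  obtain ⟨Q, hQ, hQA, hQS⟩ := huw.exists_isPath
  obtain ⟨x, hxQ, q, s, hPqs, hqQ⟩ :=
    P.reverse.exists_eq_append_first_mem (T := {y | y ∈ Q.support}) Q.start_mem_support
  have hqP : ∀ y ∈ q.support, y ∈ P.support := fun y hy => by
    rw [← List.mem_reverse, ← Walk.support_reverse, hPqs, Walk.mem_support_append_iff]
    exact .inl hy
  have hjk : (fromRel A).Adj j k := ⟨Ne.symm (hPS k P.end_mem_support), .inr hkj⟩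
  set b := Walk.cons hjk q
  set r := Q.dropUntil x hxQ
  have hb : b.IsPath := by
    refine (Walk.cons_isPath_iff hjk q).2 ⟨?_, fun hj => hPS j (hqP j hj) rfl⟩
    exact (hPqs ▸ (Walk.isPath_reverse_iff P).2 hP : (q.append s).IsPath).of_append_left
  have hbA : FollowsArcs (flip A) b := by
    have hqA : FollowsArcs (flip A) q := ((followsArcs_reverse (R := flip A)).2 hPA).mono <| by
      rw [hPqs, Walk.darts_append]
      exact List.subset_append_left _ _
    intro d hd
    rcases List.mem_cons.1 hd with rfl | hd
    exacts [hkj, hqA d hd]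
  have hrA : FollowsArcs A r := hQA.mono (Q.darts_dropUntil_subset_darts hxQ)
  have hrQ : ∀ y ∈ r.support, y ∈ Q.support :=
    fun y hy => Q.support_dropUntil_subset_support hxQ hy
  refine ⟨w, hw, b.append r, hb.append_of_support_inter (hQ.dropUntil hxQ) ?_, ?_, ?_⟩
  · intro y hy hyr
    rcases List.mem_cons.1 hy with rfl | hy
    · exact absurd rfl (hQS y (hrQ y hyr))
    · exact hqQ y hy (hrQ y hyr)
  · simp [b]
  · intro y hy
    rcases (Walk.mem_support_append_iff b r).1 hy with hy | hy
    · exact ⟨j, hj, hbA.reflTransGen_start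
        (fun x hx => Or.inr ((Walk.mem_support_append_iff b r).2 (.inl hx))) y hy⟩
    · exact ⟨w, hw, hrA.reflTransGen_end
        (fun x hx => Or.inr ((Walk.mem_support_append_iff b r).2 (.inr hx))) y hy⟩

theorem exists_superset_of_exactStep {W W' : Set V} (hWX : W ⊆ X) (hX : Nonseparable A X)
    (hXr : Rooted A X) (h : ExactStep A W W') :
    ∃ X', W' ⊆ X' ∧ Nonseparable A X' ∧ Rooted A X' := by
  obtain ⟨k, -, rfl, j, hjW, hkj, hnot⟩ := h
  by_cases hkX : k ∈ X
  · exact ⟨X, Set.union_subset hWX (Set.singleton_subset_iff.2 hkX), hX, hXr⟩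
  obtain ⟨u, ⟨_, rfl, huk⟩, w, hw, huw⟩ := Set.nonempty_iff_ne_empty.2 hnot
  obtain ⟨z, hz, e, he, hke, hroot⟩ := exists_ear (hWX hjW) (hWX hw.1) hkj huk huw
  exact ⟨X ∪ {y | y ∈ e.support},
    Set.union_subset_union hWX (Set.singleton_subset_iff.2 hke),
    hX.union_support (hWX hjW) hz e he, hXr.union hroot⟩

theorem ConnectedPair.nonseparable {P : Set V} (h : ConnectedPair A P) : Nonseparable A P := by
  obtain ⟨i, j, hij, rfl, harc⟩ := h
  have hpair : ∀ v ∈ ({i, j} : Set V), ∃ x, ({i, j} : Set V) \ {v} = {x} := by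
    rintro v (rfl | rfl)
    exacts [⟨j, Set.pair_sdiff_left hij⟩, ⟨i, Set.pair_sdiff_right hij⟩]
  refine ⟨(Set.ncard_pair hij).ge, uConnected_of_forall_reflTransGen (x₀ := j) (by simp) ?_,
    fun v hv => ?_⟩
  · rintro u (rfl | rfl)
    exacts [.single ⟨by simp, by simp, hij, harc⟩, .refl]
  · obtain ⟨x, hx⟩ := hpair v hv
    rw [hx]
    exact uConnected_of_forall_reflTransGen rfl fun u hu => hu ▸ .refl

theorem ConnectedPair.rooted {P : Set V} (h : ConnectedPair A P) : Rooted A P := by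
  obtain ⟨i, j, -, rfl, harc | harc⟩ := h
  · refine ⟨j, by simp, ?_⟩
    rintro u (rfl | rfl)
    exacts [⟨by simp, .single ⟨by simp, by simp, harc⟩⟩, ⟨by simp, .refl⟩]
  · refine ⟨i, by simp, ?_⟩
    rintro u (rfl | rfl)
    exacts [⟨by simp, .refl⟩, ⟨by simp, .single ⟨by simp, by simp, harc⟩⟩]

theorem GeneratedFromPair.exists_nonseparable_rooted {W : Set V} (h : GeneratedFromPair A W) :
    ∃ X, W ⊆ X ∧ Nonseparable A X ∧ Rooted A X := by
  obtain ⟨P, hP, hPW⟩ := h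
  induction hPW with
  | refl => exact ⟨P, subset_rfl, hP.nonseparable, hP.rooted⟩
  | tail _ hstep ih =>
    obtain ⟨X, hWX, hX, hXr⟩ := ih
    exact exists_superset_of_exactStep hWX hX hXr hstep

end Generation

theorem stmt8_general (A : V → V → Prop)
    (W : Set V) (hWcard : 3 ≤ W.ncard) (hgen : GeneratedFromPair A W) :
    ∃ X : Set V, W ⊆ X ∧ DirectedSubBlock A X := by
  obtain ⟨X, hWX, hX, hXr⟩ := hgen.exists_nonseparable_rooted
  exact ⟨X, hWX, hXr, hWcard.trans (Set.ncard_le_ncard hWX hX.finite), hX.2.1, hX.2.2⟩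

/-- Corollary A.1. -/
theorem stmt8 [Fintype V] (A : V → V → Prop) (hirr : ∀ v : V, ¬ A v v)
    (W : Set V) (hWcard : 3 ≤ W.ncard) (hgen : GeneratedFromPair A W) :
    ∃ X : Set V, W ⊆ X ∧ DirectedSubBlock A X :=
  stmt8_general A W hWcard hgen
end

section
/- (Lemma A.5 of the paper.) Let X ⊆ V be such that D[X] is a directed sub-block, let W ⊊ X with |W| ≥ 2, and let i ∈ W be such that i is reachable in D[W] from every other vertex of W and i is reachable in D[X] from every other vertex of X. Then there exists k ∈ X ∖ W such that W ∪ {k} is obtained from W by one exact generation step and i is reachable in D[W ∪ {k}] from every other vertex of W ∪ {k}. -/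
open Set

variable {V : Type*}

/-!
Pick a vertex outside `W`; its path to `i` inside `X` enters `W` through an arc `k₁ → j`.
In `D[X ∖ {j}]` every vertex either reaches `W ∖ {j}`, or its path to `i` must enter `W`
through `j`, so it reaches some `k ∉ W` with an arc `k → j`. Both sets of vertices are
closed under predecessors, are nonempty (they contain `W ∖ {j}` and `k₁`), and cover
`X ∖ {j}`, which is connected since `D[X]` is biconnected. Hence they meet, and a common
vertex witnesses that `j` is not dynamically partitioning with respect to `{k}` and `W ∖ {j}`.
-/

namespace ReachIn

variable {A : V → V → Prop} {S T : Set V} {u v w : V}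

theorem mono (hST : S ⊆ T) (h : ReachIn A S u v) : ReachIn A T u v :=
  ⟨hST h.1, Relation.ReflTransGen.mono (fun _ _ hab => ⟨hST hab.1, hST hab.2.1, hab.2.2⟩) _ _ h.2⟩

theorem mem_right (h : ReachIn A S u v) : v ∈ S := by
  obtain ⟨hu, huv⟩ := h
  induction huv with
  | refl => exact hu
  | tail _ hstep _ => exact hstep.2.1

theorem refl (hu : u ∈ S) : ReachIn A S u u :=
  ⟨hu, .refl⟩

theorem head (huv : StepIn A S u v) (hvw : ReachIn A S v w) : ReachIn A S u w :=
  ⟨huv.1, hvw.2.head huv⟩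

theorem tail (huv : ReachIn A S u v) (hvw : StepIn A S v w) : ReachIn A S u w :=
  ⟨huv.1, huv.2.tail hvw⟩

end ReachIn

theorem Relation.ReflTransGen.exists_stepIn_into {A : V → V → Prop} {S W : Set V} {u v : V}
    (h : Relation.ReflTransGen (StepIn A S) u v) (hv : v ∈ W) (hu : u ∉ W) :
    ∃ k j, ReachIn A (S \ W) u k ∧ j ∈ W ∧ StepIn A S k j := by
  induction h using Relation.ReflTransGen.head_induction_on with
  | refl => exact absurd hv hu
  | @head a c hac _ ih =>
    by_cases hc : c ∈ W
    · exact ⟨a, c, .refl ⟨hac.1, hu⟩, hc, hac⟩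
    · obtain ⟨k, j, hck, hjW, hkj⟩ := ih hc
      exact ⟨k, j, hck.head ⟨⟨hac.1, hu⟩, ⟨hac.2.1, hc⟩, hac.2.2⟩, hjW, hkj⟩

theorem Relation.ReflTransGen.exists_crossing {α : Type*} {r : α → α → Prop} {F : Set α}
    {u v : α} (h : Relation.ReflTransGen r u v) (hu : u ∉ F) (hv : v ∈ F) :
    ∃ a b, r a b ∧ a ∉ F ∧ b ∈ F := by
  induction h using Relation.ReflTransGen.head_induction_on with
  | refl => exact absurd hv hu
  | @head a c hac _ ih =>
    by_cases hc : c ∈ F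
    · exact ⟨a, c, hac, hu, hc⟩
    · exact ih hc

theorem mem_inSet_of_stepIn {A : V → V → Prop} {S Y : Set V} {a b : V}
    (hab : StepIn A S a b) (hb : b ∈ InSet A S Y) : a ∈ InSet A S Y := by
  obtain ⟨y, hy, hby⟩ := hb
  exact ⟨y, hy, hby.head hab⟩

theorem inSet_subset {A : V → V → Prop} {S Y : Set V} : InSet A S Y ⊆ S :=
  fun _ ⟨_, _, h⟩ => h.1

theorem UConnected.inSet_inter_nonempty {A : V → V → Prop} {S Y Z : Set V}
    (hS : UConnected A S) (hcover : S ⊆ InSet A S Y ∪ InSet A S Z)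
    (hY : (InSet A S Y).Nonempty) (hZ : (InSet A S Z).Nonempty) :
    (InSet A S Y ∩ InSet A S Z).Nonempty := by
  by_contra hdisj
  obtain ⟨y, hy⟩ := hY
  obtain ⟨z, hz⟩ := hZ
  have hzY : z ∉ InSet A S Y := fun hzY => hdisj ⟨z, hzY, hz⟩
  obtain ⟨a, b, ⟨haS, hbS, -, hab | hba⟩, haY, hbY⟩ :=
    (hS.2 z (inSet_subset hz) y (inSet_subset hy)).exists_crossing hzY hy
  · exact haY (mem_inSet_of_stepIn ⟨haS, hbS, hab⟩ hbY)
  · have haZ : a ∈ InSet A S Z := (hcover haS).resolve_left haY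
    exact hdisj ⟨b, hbY, mem_inSet_of_stepIn ⟨hbS, haS, hba⟩ haZ⟩

theorem exists_not_dynPart {A : V → V → Prop} {X W : Set V} {i j k₁ w₀ : V}
    (hconn : UConnected A (X \ {j})) (hreachX : ∀ v ∈ X, ReachIn A X v i) (hiW : i ∈ W)
    (hjW : j ∈ W) (hw₀ : w₀ ∈ W \ {j}) (hWX : W ⊆ X) (hk₁ : k₁ ∈ X \ W) (hk₁j : A k₁ j) :
    ∃ k ∈ X \ W, A k j ∧ ¬ DynPart A {k} (W \ {j}) {j} := by
  set S := X \ {j}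
  have hk₁S : k₁ ∈ S := ⟨hk₁.1, fun h => hk₁.2 (h ▸ hjW)⟩
  have hcover : S ⊆ InSet A S (W \ {j}) ∪ InSet A S {k | k ∉ W ∧ A k j} := by
    intro a haS
    by_cases haW : a ∈ W
    · exact .inl ⟨a, ⟨haW, haS.2⟩, .refl haS⟩
    obtain ⟨k, j', hak, hj'W, hkj'⟩ := (hreachX a haS.1).2.exists_stepIn_into hiW haW
    have hWS : X \ W ⊆ S := fun x hx => ⟨hx.1, fun h => hx.2 (h ▸ hjW)⟩
    by_cases hj' : j' = j
    · exact .inr ⟨k, ⟨hak.mem_right.2, hj' ▸ hkj'.2.2⟩, hak.mono hWS⟩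
    · have hkj'S : StepIn A S k j' := ⟨hWS hak.mem_right, ⟨hkj'.2.1, hj'⟩, hkj'.2.2⟩
      exact .inl ⟨j', ⟨hj'W, hj'⟩, (hak.mono hWS).tail hkj'S⟩
  obtain ⟨u, ⟨w, hw, huw⟩, ⟨k, ⟨hkW, hkj⟩, huk⟩⟩ := hconn.inSet_inter_nonempty hcover
    ⟨w₀, w₀, hw₀, .refl ⟨hWX hw₀.1, hw₀.2⟩⟩ ⟨k₁, k₁, ⟨hk₁.2, hk₁j⟩, .refl hk₁S⟩
  have hSj : S ⊆ {j}ᶜ := fun x hx => hx.2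
  refine ⟨k, ⟨huk.mem_right.1, hkW⟩, hkj, fun hdyn => ?_⟩
  have hu : u ∈ InSet A {j}ᶜ {k} ∩ InSet A {j}ᶜ (W \ {j}) :=
    ⟨⟨k, rfl, huk.mono hSj⟩, ⟨w, hw, huw.mono hSj⟩⟩
  exact nonempty_iff_ne_empty.mp ⟨u, hu⟩ hdyn

theorem stmt9_general (A : V → V → Prop)
    (X W : Set V) (i : V)
    (hX : DirectedSubBlock A X) (hWX : W ⊂ X) (hWcard : 2 ≤ W.ncard) (hiW : i ∈ W)
    (hreachW : ∀ v ∈ W, ReachIn A W v i)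
    (hreachX : ∀ v ∈ X, ReachIn A X v i) :
    ∃ k ∈ X \ W, ExactStep A W (W ∪ {k}) ∧
      ∀ v ∈ W ∪ {k}, ReachIn A (W ∪ {k}) v i := by
  obtain ⟨x₀, hx₀X, hx₀W⟩ := exists_of_ssubset hWX
  obtain ⟨k₁, j, hx₀k₁, hjW, hk₁j⟩ := (hreachX x₀ hx₀X).2.exists_stepIn_into hiW hx₀W
  obtain ⟨w₀, hw₀W, hw₀j⟩ := exists_ne_of_one_lt_ncard hWcard j
  obtain ⟨k, hk, hkj, hdyn⟩ := exists_not_dynPart (hX.2.2.2 j (hWX.1 hjW)) hreachX hiW hjW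
    ⟨hw₀W, hw₀j⟩ hWX.1 hx₀k₁.mem_right hk₁j.2.2
  refine ⟨k, hk, ⟨k, hk.2, rfl, j, hjW, hkj, hdyn⟩, ?_⟩
  rintro v (hvW | rfl)
  · exact (hreachW v hvW).mono subset_union_left
  · exact ReachIn.head ⟨Or.inr rfl, Or.inl hjW, hkj⟩ ((hreachW j hjW).mono subset_union_left)

/-- Lemma A.5. -/
theorem stmt9 [Fintype V] (A : V → V → Prop) (hirr : ∀ v : V, ¬ A v v)
    (X W : Set V) (i : V)
    (hX : DirectedSubBlock A X) (hWX : W ⊂ X) (hWcard : 2 ≤ W.ncard) (hiW : i ∈ W)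
    (hreachW : ∀ v ∈ W, ReachIn A W v i)
    (hreachX : ∀ v ∈ X, ReachIn A X v i) :
    ∃ k ∈ X \ W, ExactStep A W (W ∪ {k}) ∧
      ∀ v ∈ W ∪ {k}, ReachIn A (W ∪ {k}) v i :=
  stmt9_general A X W i hX hWX hWcard hiW hreachW hreachX
end

section
/- (Lemma A.2 of the paper.) If X ⊆ V is such that D[X] is a directed sub-block, then there exist i, j ∈ X with (j, i) ∈ A such that X can be generated from the connected pair {i, j}. (Note |X| ≥ 3, since the underlying graph of D[X] is biconnected.) -/
open Set

variable {V : Type*}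

/-!
Let `r` be a root of `D[X]`, reachable in `D[X]` from every vertex of `X`. The last arc of a
path from any other vertex to `r` gives a connected pair `{r, j₀}` with `(j₀, r) ∈ A`, and we
grow it one vertex at a time inside `X`. Given `r ∈ W ⊊ X`, a path from outside `W` to `r`
enters `W` through an arc `(k₀, j)`. If `k₀` reaches `W ∖ {j}` in `D − j` we add `k₀`.
Otherwise let `B` be the vertices of `X ∖ {j}` that cannot reach `W ∖ {j}` in `D − j`: arcs
of `D[X]` leave `B` only into `j`, and `B ∌ r`, so every vertex `b ∈ B` reaches some `k ∈ B`
with `(k, j) ∈ A` inside `B`. Since `X ∖ {j}` is connected, some arc `(c, b)` enters `B` from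
a vertex `c` that does reach `W ∖ {j}`; then `c` is a common ancestor of `k` and `W ∖ {j}` in
`D − j`, so `j` is not dynamically partitioning and we may add `k`.
-/

open Relation

theorem Relation.ReflTransGen.exists_step_leaving {r : V → V → Prop} {B : Set V} {u v : V}
    (h : ReflTransGen r u v) (hu : u ∈ B) (hv : v ∉ B) :
    ∃ b ∈ B, ∃ c ∉ B, r b c ∧ ReflTransGen (fun a a' => r a a' ∧ a ∈ B ∧ a' ∈ B) u b := by
  induction h using ReflTransGen.head_induction_on with
  | refl => exact absurd hu hv
  | @head a c hac _ ih =>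
    by_cases hc : c ∈ B
    · obtain ⟨b, hb, d, hd, hbd, hcb⟩ := ih hc
      exact ⟨b, hb, d, hd, hbd, .head ⟨hac, hu, hc⟩ hcb⟩
    · exact ⟨a, hu, c, hc, hac, .refl⟩

section InSet

variable {A : V → V → Prop} {S Y : Set V}

theorem subset_inSet (hY : Y ⊆ S) : Y ⊆ InSet A S Y :=
  fun y hy => ⟨y, hy, hY hy, .refl⟩

theorem mem_inSet_of_arc {b c : V} (hb : b ∈ S) (hbc : A b c) (hc : c ∈ InSet A S Y) :
    b ∈ InSet A S Y := by
  obtain ⟨y, hy, hcS, hcy⟩ := hc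
  exact ⟨y, hy, hb, .head ⟨hb, hcS, hbc⟩ hcy⟩

theorem not_dynPart_of_reach {k u j : V} (hu : u ≠ j) (huk : ReflTransGen (StepIn A {j}ᶜ) u k)
    (huY : u ∈ InSet A {j}ᶜ Y) : ¬ DynPart A {k} Y {j} := fun h =>
  (eq_empty_iff_forall_notMem.1 h) u ⟨⟨k, rfl, hu, huk⟩, huY⟩

end InSet

theorem UConnected.exists_arc_leaving {A : V → V → Prop} {S I : Set V} (hS : UConnected A S)
    (hclosed : ∀ b ∈ S, ∀ c ∈ S, A b c → c ∈ I → b ∈ I)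
    {p q : V} (hp : p ∈ S) (hpI : p ∉ I) (hq : q ∈ S) (hqI : q ∈ I) :
    ∃ c ∈ S, c ∈ I ∧ ∃ b ∈ S, b ∉ I ∧ A c b := by
  obtain ⟨b, hbI, c, hcI, ⟨hbS, hcS, -, hbc | hcb⟩, -⟩ :=
    (hS.2 p hp q hq).exists_step_leaving (B := Iᶜ) hpI (by simpa using hqI)
  · exact absurd (hclosed b hbS c hcS hbc (by simpa using hcI)) hbI
  · exact ⟨c, hcS, by simpa using hcI, b, hbS, hbI, hcb⟩

section Generation

variable {A : V → V → Prop} {X W : Set V} {r : V}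

theorem exists_arc_to_of_not_mem_inSet (hreach : ∀ v ∈ X, ReachIn A X v r) (hrW : r ∈ W)
    {j b : V} (hbX : b ∈ X) (hbj : b ≠ j) (hbI : b ∉ InSet A {j}ᶜ (W \ {j})) :
    ∃ k ∈ X \ W, A k j ∧ ReflTransGen (StepIn A {j}ᶜ) b k := by
  have hWI : W \ {j} ⊆ InSet A {j}ᶜ (W \ {j}) :=
    subset_inSet fun w hw => hw.2
  set B : Set V := {v | v ∈ X ∧ v ≠ j ∧ v ∉ InSet A {j}ᶜ (W \ {j})}
  have hrB : r ∉ B := fun ⟨_, hrj, hrI⟩ => hrI (hWI ⟨hrW, hrj⟩)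
  obtain ⟨k, ⟨hkX, hkj, hkI⟩, c, hcB, ⟨-, hcX, hkc⟩, hbk⟩ :=
    (hreach b hbX).2.exists_step_leaving (B := B) ⟨hbX, hbj, hbI⟩ hrB
  have hcj : c = j := by
    by_contra hcj
    exact hkI (mem_inSet_of_arc hkj hkc (by by_contra hcI; exact hcB ⟨hcX, hcj, hcI⟩))
  subst hcj
  refine ⟨k, ⟨hkX, fun hkW => hkI (hWI ⟨hkW, hkj⟩)⟩, hkc, ?_⟩
  exact ReflTransGen.mono (fun a a' ⟨⟨_, _, h⟩, ha, ha'⟩ => ⟨ha.2.1, ha'.2.1, h⟩) _ _ hbk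

theorem exists_exactStep_of_nonempty_sdiff (hreach : ∀ v ∈ X, ReachIn A X v r)
    (hdel : ∀ v ∈ X, UConnected A (X \ {v})) (hWX : W ⊆ X) (hrW : r ∈ W)
    (hW : W.Nontrivial) (hXW : (X \ W).Nonempty) :
    ∃ k ∈ X \ W, ExactStep A W (W ∪ {k}) := by
  obtain ⟨v, hvX, hvW⟩ := hXW
  obtain ⟨k₀, hk₀W, j, hjW, ⟨hk₀X, hjX, hk₀A⟩, -⟩ :=
    (hreach v hvX).2.exists_step_leaving (B := Wᶜ) hvW (by simpa using hrW)
  replace hjW : j ∈ W := by simpa using hjW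
  suffices ∃ k ∈ X \ W, A k j ∧ ∃ u ≠ j, ReflTransGen (StepIn A {j}ᶜ) u k ∧
      u ∈ InSet A {j}ᶜ (W \ {j}) by
    obtain ⟨k, hk, hkj, u, huj, huk, huI⟩ := this
    exact ⟨k, hk, k, hk.2, rfl, j, hjW, hkj, not_dynPart_of_reach huj huk huI⟩
  have hk₀ne : k₀ ≠ j := fun h => hk₀W (h ▸ hjW)
  by_cases hk₀I : k₀ ∈ InSet A {j}ᶜ (W \ {j})
  · exact ⟨k₀, ⟨hk₀X, hk₀W⟩, hk₀A, k₀, hk₀ne, .refl, hk₀I⟩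
  obtain ⟨w, hwW, hwj⟩ := hW.exists_ne j
  obtain ⟨c, ⟨-, hcj⟩, hcI, b, ⟨hbX, hbj⟩, hbI, hcb⟩ :=
    (hdel j hjX).exists_arc_leaving (fun b hb _ _ hbc hcI => mem_inSet_of_arc hb.2 hbc hcI)
      ⟨hk₀X, hk₀ne⟩ hk₀I ⟨hWX hwW, hwj⟩ (subset_inSet (fun _ h => h.2) ⟨hwW, hwj⟩)
  obtain ⟨k, hk, hkj, hbk⟩ := exists_arc_to_of_not_mem_inSet hreach hrW hbX hbj hbI
  exact ⟨k, hk, hkj, c, hcj, .head ⟨hcj, hbj, hcb⟩ hbk, hcI⟩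

theorem reflTransGen_exactStep_of_subset (hX : X.Finite) (hreach : ∀ v ∈ X, ReachIn A X v r)
    (hdel : ∀ v ∈ X, UConnected A (X \ {v})) (hWX : W ⊆ X) (hrW : r ∈ W)
    (hW : W.Nontrivial) : ReflTransGen (ExactStep A) W X := by
  induction hn : (X \ W).ncard generalizing W with
  | zero =>
    rw [Subset.antisymm hWX (sdiff_eq_empty.1 ((ncard_eq_zero hX.sdiff).1 hn))]
  | succ n ih =>
    obtain ⟨k, hk, hstep⟩ := exists_exactStep_of_nonempty_sdiff hreach hdel hWX hrW hW
      (nonempty_of_ncard_ne_zero (by omega))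
    refine .head hstep (ih (union_subset hWX (singleton_subset_iff.2 hk.1))
      (.inl hrW) (hW.mono subset_union_left) ?_)
    rw [← sdiff_sdiff, ncard_sdiff_singleton_of_mem hk, hn, Nat.add_sub_cancel]

end Generation

theorem stmt10_general (A : V → V → Prop) (X : Set V) (hX : DirectedSubBlock A X) :
    3 ≤ X.ncard ∧ ∃ i ∈ X, ∃ j ∈ X, i ≠ j ∧ A j i ∧
      Relation.ReflTransGen (ExactStep A) {i, j} X := by
  obtain ⟨⟨r, hrX, hreach⟩, h3, -, hdel⟩ := hX
  obtain ⟨v, hvX, hvr⟩ := exists_ne_of_one_lt_ncard (s := X) (by omega) r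
  obtain ⟨j, hjr, i, hir, ⟨hjX, -, hji⟩, -⟩ :=
    (hreach v hvX).2.exists_step_leaving (B := {r}ᶜ) hvr (by simp)
  obtain rfl : i = r := by simpa using hir
  refine ⟨h3, i, hrX, j, hjX, Ne.symm hjr, hji, ?_⟩
  exact reflTransGen_exactStep_of_subset (finite_of_ncard_pos (by omega)) hreach hdel
    (insert_subset hrX (singleton_subset_iff.2 hjX)) (.inl rfl)
    (nontrivial_pair (Ne.symm hjr))

/-- Lemma A.2. -/
theorem stmt10 [Fintype V] (A : V → V → Prop) (hirr : ∀ v : V, ¬ A v v)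
    (X : Set V) (hX : DirectedSubBlock A X) :
    3 ≤ X.ncard ∧ ∃ i ∈ X, ∃ j ∈ X, i ≠ j ∧ A j i ∧
      Relation.ReflTransGen (ExactStep A) {i, j} X :=
  stmt10_general A X hX
end

section
/- (Core step of Theorem B.1 of the paper.) Suppose n ≥ 3 and every directed sub-block of D has at most n vertices, and let x ∈ ℕ with x ≥ n − 2. Let W ⊆ V with |W| ≥ 2 be such that some vertex of W is reachable in D[W] from every other vertex of W, let i ∈ W and let j ∈ V ∖ W with (j, i) ∈ A. If i is cycle-partitioning at order x with respect to {j} and W ∖ {i}, then i is dynamically partitioning with respect to {j} and W ∖ {i}. -/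
/-!
If `i` were not dynamically partitioning, some `u` would reach both `j` and some `w ∈ W \ {i}` in
`D − {i}`. Take such a fork `j ← u → w` of minimal total length `s`; cycle-partitioning at order
`x` gives `s > x ≥ n - 2`, and minimality makes the fork a path whose vertices other than `w` lie
outside `W`. Inside `D[W]` both `i` and `w` reach the root, hence reach some `c` along paths
meeting only at `c`. Through the arc `j → i` these close up into the cycle
`u → j → i → c ← w ← u`, which has at least `s + 2 ≥ n + 1` vertices, all reaching `c` inside
it: a directed sub-block with more than `n` vertices.
-/

open Set

variable {V : Type*}

open Relation Function

/-- `IsWalk r u l v`: the list `l` enumerates the vertices after `u` of a walk from `u` to `v`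
along `r`, so the walk has `l.length` steps. -/
def IsWalk (r : V → V → Prop) : V → List V → V → Prop
  | u, [], v => u = v
  | u, b :: l, v => r u b ∧ IsWalk r b l v

section IsWalk

variable {r r' : V → V → Prop} {u v w z : V} {l l₁ l₂ : List V}

@[simp]
theorem isWalk_nil : IsWalk r u [] v ↔ u = v := Iff.rfl

@[simp]
theorem isWalk_cons {b : V} : IsWalk r u (b :: l) v ↔ r u b ∧ IsWalk r b l v := Iff.rfl

theorem isWalk_append : IsWalk r u (l₁ ++ l₂) w ↔ ∃ v, IsWalk r u l₁ v ∧ IsWalk r v l₂ w := by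
  induction l₁ generalizing u with
  | nil => simp
  | cons b l₁ ih => simp [ih, and_assoc]

theorem IsWalk.append (h₁ : IsWalk r u l₁ v) (h₂ : IsWalk r v l₂ w) : IsWalk r u (l₁ ++ l₂) w :=
  isWalk_append.2 ⟨v, h₁, h₂⟩

theorem IsWalk.imp (h : ∀ a b, r a b → r' a b) : ∀ {u l v}, IsWalk r u l v → IsWalk r' u l v
  | _, [], _, hw => hw
  | _, _ :: _, _, ⟨hs, hw⟩ => ⟨h _ _ hs, hw.imp h⟩

theorem exists_isWalk_of_reflTransGen (h : ReflTransGen r u v) : ∃ l, IsWalk r u l v := by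
  induction h using ReflTransGen.head_induction_on with
  | refl => exact ⟨[], rfl⟩
  | head hs _ ih =>
    obtain ⟨l, hl⟩ := ih
    exact ⟨_ :: l, hs, hl⟩

theorem IsWalk.reflTransGen : ∀ {u l v}, IsWalk r u l v → ReflTransGen r u v
  | _, [], _, hw => hw ▸ .refl
  | _, _ :: _, _, ⟨hs, hw⟩ => .head hs hw.reflTransGen

theorem IsWalk.last_mem : ∀ {u l v}, IsWalk r u l v → v ∈ u :: l
  | _, [], _, hw => hw ▸ List.mem_cons_self
  | _, _ :: _, _, ⟨_, hw⟩ => List.mem_cons_of_mem _ hw.last_mem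

theorem IsWalk.mem_of_ne_nil (h : IsWalk r u l v) (hl : l ≠ []) : v ∈ l := by
  obtain ⟨b, l, rfl⟩ := List.exists_cons_of_ne_nil hl
  exact h.2.last_mem

theorem IsWalk.cons_eq_dropLast_append :
    ∀ {u l v}, IsWalk r u l v → u :: l = (u :: l).dropLast ++ [v]
  | _, [], _, hw => by rw [show _ = _ from hw]; rfl
  | u, b :: l, _, ⟨_, hw⟩ => by
    rw [List.dropLast_cons_of_ne_nil (List.cons_ne_nil _ _), List.cons_append,
      ← hw.cons_eq_dropLast_append]

theorem IsWalk.cons_reverse_tail (h : IsWalk r u l v) :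
    v :: (u :: l).reverse.tail = (u :: l).reverse := by
  rw [List.tail_reverse, h.cons_eq_dropLast_append, List.dropLast_concat, List.reverse_append]
  rfl

theorem IsWalk.reverse : ∀ {u l v}, IsWalk r u l v → IsWalk (swap r) v (u :: l).reverse.tail u
  | _, [], _, hw => hw.symm
  | u, b :: l, v, ⟨hs, hw⟩ => by
    rw [List.reverse_cons, List.tail_append_of_ne_nil (by simp)]
    exact hw.reverse.append ⟨hs, rfl⟩

theorem IsWalk.rotate (h : IsWalk r u (l₁ ++ v :: l₂) u) : IsWalk r v (l₂ ++ l₁ ++ [v]) v := by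
  obtain ⟨y, h₁, hyv, h₂⟩ := isWalk_append.1 h
  exact (h₂.append h₁).append ⟨hyv, rfl⟩

theorem IsWalk.exists_suffix_of_mem :
    ∀ {u l v}, IsWalk r u l v → z ∈ l → ∃ l', IsWalk r z l' v ∧ l'.length < l.length
  | _, b :: l, _, ⟨_, hw⟩, hz => by
    rcases List.mem_cons.1 hz with rfl | hz
    · exact ⟨l, hw, by simp⟩
    · obtain ⟨l', hl', hlt⟩ := hw.exists_suffix_of_mem hz
      exact ⟨l', hl', by simp; omega⟩

theorem IsWalk.exists_prefix_of_mem_dropLast :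
    ∀ {u l v}, IsWalk r u l v → z ∈ (u :: l).dropLast → ∃ l', IsWalk r u l' z ∧ l'.length < l.length
  | u, b :: l, _, ⟨hs, hw⟩, hz => by
    rw [List.dropLast_cons_of_ne_nil (List.cons_ne_nil _ _)] at hz
    rcases List.mem_cons.1 hz with rfl | hz
    · exact ⟨[], rfl, by simp⟩
    · obtain ⟨l', hl', hlt⟩ := hw.exists_prefix_of_mem_dropLast hz
      exact ⟨b :: l', ⟨hs, hl'⟩, by simpa using hlt⟩

theorem IsWalk.exists_shorter_of_not_nodup :
    ∀ {u l v}, IsWalk r u l v → ¬ (u :: l).Nodup → ∃ l', IsWalk r u l' v ∧ l'.length < l.length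
  | u, [], _, _, hnd => absurd (List.nodup_singleton u) hnd
  | u, b :: l, _, ⟨hs, hw⟩, hnd => by
    by_cases hu : u ∈ b :: l
    · exact IsWalk.exists_suffix_of_mem ⟨hs, hw⟩ hu
    · obtain ⟨l', hl', hlt⟩ :=
        hw.exists_shorter_of_not_nodup fun h => hnd (List.nodup_cons.2 ⟨hu, h⟩)
      exact ⟨b :: l', ⟨hs, hl'⟩, by simpa using hlt⟩

theorem IsWalk.reflTransGen_of_mem (h : IsWalk r u l v) (hz : z ∈ u :: l) : ReflTransGen r z v := by
  rcases List.mem_cons.1 hz with rfl | hz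
  · exact h.reflTransGen
  · obtain ⟨l', hl', -⟩ := h.exists_suffix_of_mem hz
    exact hl'.reflTransGen

theorem IsWalk.stepsLe : ∀ {n u l v}, IsWalk r u l v → l.length ≤ n → StepsLe r n u v
  | 0, _, [], _, hw, _ => hw
  | _ + 1, _, [], _, hw, _ => Or.inl hw
  | _ + 1, _, _ :: _, _, ⟨hs, hw⟩, hn => Or.inr ⟨_, hs, hw.stepsLe (by simpa using hn)⟩

end IsWalk

section InducedSubgraph

variable {A : V → V → Prop} {S : Set V} {u v z : V} {l : List V}

theorem IsWalk.mem_of_ne (h : IsWalk (StepIn A S) u l v) (huv : u ≠ v) : u ∈ S := by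
  cases l with
  | nil => exact absurd h huv
  | cons _ _ => exact h.1.1

theorem IsWalk.mem_of_mem (h : IsWalk (StepIn A S) u l v) (hu : u ∈ S) (hz : z ∈ u :: l) :
    z ∈ S := by
  rcases List.mem_cons.1 hz with rfl | hz
  · exact hu
  · obtain ⟨s, t, rfl⟩ := List.append_of_mem hz
    obtain ⟨y, -, hy, -⟩ := isWalk_append.1 h
    exact hy.2.1

theorem IsWalk.of_stepIn (h : IsWalk (StepIn A S) u l v) : IsWalk A u l v :=
  h.imp fun _ _ hs => hs.2.2

theorem IsWalk.stepIn : ∀ {u l v}, IsWalk A u l v → (∀ z ∈ u :: l, z ∈ S) →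
    IsWalk (StepIn A S) u l v
  | _, [], _, hw, _ => hw
  | _, _ :: _, _, ⟨hs, hw⟩, hS =>
    ⟨⟨hS _ List.mem_cons_self, hS _ (by simp), hs⟩,
      hw.stepIn fun z hz => hS z (List.mem_cons_of_mem _ hz)⟩

theorem IsWalk.reachIn (h : IsWalk A u l v) (hS : ∀ z ∈ u :: l, z ∈ S) (hz : z ∈ u :: l) :
    ReachIn A S z v :=
  ⟨hS z hz, (h.stepIn hS).reflTransGen_of_mem hz⟩

theorem IsWalk.uStep : ∀ {u l v}, IsWalk (SymmGen A) u l v → (u :: l).Nodup →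
    (∀ z ∈ u :: l, z ∈ S) → IsWalk (UStep A S) u l v
  | _, [], _, hw, _, _ => hw
  | _, _ :: _, _, ⟨hs, hw⟩, hnd, hS =>
    ⟨⟨hS _ List.mem_cons_self, hS _ (by simp),
        fun h => (List.nodup_cons.1 hnd).1 (h ▸ List.mem_cons_self), hs⟩,
      hw.uStep (List.nodup_cons.1 hnd).2 fun z hz => hS z (List.mem_cons_of_mem _ hz)⟩

end InducedSubgraph

theorem ncard_setOf_mem {L : List V} (h : L.Nodup) : {z | z ∈ L}.ncard = L.length := by
  classical
  rw [show {z | z ∈ L} = (L.toFinset : Set V) by ext; simp, Set.ncard_coe_finset,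
    List.toFinset_card_of_nodup h]

section Cycles

variable {A : V → V → Prop}

instance {S : Set V} : Std.Symm (UStep A S) :=
  ⟨fun _ _ ⟨ha, hb, hne, h⟩ => ⟨hb, ha, hne.symm, h.symm⟩⟩

theorem uConnected_of_isWalk {a b : V} {l : List V} (hw : IsWalk (SymmGen A) a l b)
    (hnd : (a :: l).Nodup) : UConnected A {z | z ∈ a :: l} := by
  have hU := hw.uStep (S := {z | z ∈ a :: l}) hnd fun _ hz => hz
  exact ⟨⟨a, List.mem_cons_self⟩, fun p hp q hq =>
    (hU.reflTransGen_of_mem hp).trans (symm (hU.reflTransGen_of_mem hq))⟩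

/-- Deleting a vertex of a cycle leaves a path: rotate the cycle to start at that vertex. -/
theorem biconnected_of_isWalk {u : V} {L : List V} (hw : IsWalk (SymmGen A) u L u)
    (hnd : L.Nodup) (hlen : 3 ≤ L.length) : Biconnected A {z | z ∈ L} := by
  refine ⟨(ncard_setOf_mem hnd).symm ▸ hlen, ?_, fun v hv => ?_⟩
  · obtain ⟨a, l, rfl⟩ := List.exists_cons_of_ne_nil (List.ne_nil_of_length_pos (l := L) (by omega))
    exact uConnected_of_isWalk hw.2 hnd
  · obtain ⟨s, t, rfl⟩ := List.append_of_mem hv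
    have hnd' : (v :: (t ++ s)).Nodup := by
      rw [List.nodup_cons, List.nodup_append_comm, List.mem_append, or_comm, ← List.mem_append,
        ← List.nodup_cons, ← List.nodup_middle]
      exact hnd
    obtain ⟨a, l, hts⟩ := List.exists_cons_of_ne_nil (l := t ++ s)
      (List.ne_nil_of_length_pos (by simp at hlen ⊢; omega))
    obtain ⟨y, hy, -⟩ := isWalk_append.1 hw.rotate
    rw [hts] at hnd' hy
    replace hy := hy.2
    convert uConnected_of_isWalk hy (List.nodup_cons.1 hnd').2 using 1
    ext z
    have hv' := (List.nodup_cons.1 hnd').1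
    simp only [Set.mem_sdiff, Set.mem_ofPred_eq, Set.mem_singleton_iff, ← hts, List.mem_append,
      List.mem_cons] at hv' ⊢
    constructor
    · rintro ⟨h | h | h, hzv⟩ <;> tauto
    · rintro (h | h) <;> refine ⟨by tauto, ?_⟩ <;> rintro rfl <;> tauto

end Cycles

/-- `P ++ (u :: Q).reverse.tail` lists the closed walk that goes from `u` to `c` along `P` and
back along `Q` reversed; every vertex of it reaches `c` along `P` or `Q`. -/
theorem directedSubBlock_of_isWalk {A : V → V → Prop} {u c : V} {P Q : List V}
    (hP : IsWalk A u P c) (hQ : IsWalk A u Q c) (hP₀ : P ≠ [])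
    (hnd : (P ++ (u :: Q).reverse.tail).Nodup) (hlen : 3 ≤ (P ++ (u :: Q).reverse.tail).length) :
    DirectedSubBlock A {z | z ∈ P ++ (u :: Q).reverse.tail} := by
  set U := {z | z ∈ P ++ (u :: Q).reverse.tail}
  have hcU : c ∈ U := List.mem_append_left _ (hP.mem_of_ne_nil hP₀)
  have hQU : ∀ z ∈ u :: Q, z ∈ U := by
    intro z hz
    rw [← List.mem_reverse, ← hQ.cons_reverse_tail, List.mem_cons] at hz
    rcases hz with rfl | hz
    exacts [hcU, List.mem_append_right _ hz]
  have hPU : ∀ z ∈ u :: P, z ∈ U := by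
    intro z hz
    rcases List.mem_cons.1 hz with rfl | hz
    exacts [hQU _ List.mem_cons_self, List.mem_append_left _ hz]
  have hcycle : IsWalk (SymmGen A) u (P ++ (u :: Q).reverse.tail) u :=
    (hP.imp fun _ _ => .of_rel).append (hQ.reverse.imp fun _ _ => .of_rel_symm)
  refine ⟨⟨c, hcU, fun z hz => ?_⟩, biconnected_of_isWalk hcycle hnd hlen⟩
  rcases List.mem_append.1 hz with hz | hz
  · exact hP.reachIn hPU (List.mem_cons_of_mem _ hz)
  · exact hQ.reachIn hQU (List.mem_reverse.1 (List.mem_of_mem_tail hz))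

def IsFork (r : V → V → Prop) (X Y : Set V) (u : V) (l₁ l₂ : List V) : Prop :=
  (∃ x ∈ X, IsWalk r u l₁ x) ∧ ∃ y ∈ Y, IsWalk r u l₂ y

structure IsMinFork (r : V → V → Prop) (X Y : Set V) (u : V) (l₁ l₂ : List V) : Prop where
  isFork : IsFork r X Y u l₁ l₂
  length_le : ∀ u' l₁' l₂', IsFork r X Y u' l₁' l₂' →
    l₁.length + l₂.length ≤ l₁'.length + l₂'.length

section Forks

variable {r : V → V → Prop} {X Y : Set V} {u : V} {l₁ l₂ : List V}

theorem IsFork.exists_isMinFork (h : IsFork r X Y u l₁ l₂) :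
    ∃ u l₁ l₂, IsMinFork r X Y u l₁ l₂ := by
  classical
  have hex : ∃ n u l₁ l₂, IsFork r X Y u l₁ l₂ ∧ l₁.length + l₂.length = n :=
    ⟨_, u, l₁, l₂, h, rfl⟩
  obtain ⟨u, l₁, l₂, hf, hn⟩ := Nat.find_spec hex
  exact ⟨u, l₁, l₂, hf, fun u' l₁' l₂' hf' => hn ▸ Nat.find_min' hex ⟨u', l₁', l₂', hf', rfl⟩⟩

theorem IsMinFork.nodup (h : IsMinFork r X Y u l₁ l₂) : (u :: (l₁ ++ l₂)).Nodup := by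
  obtain ⟨⟨⟨x, hx, h₁⟩, y, hy, h₂⟩, hmin⟩ := h
  have hnd₁ : (u :: l₁).Nodup := by
    by_contra hnd
    obtain ⟨l, hl, hlt⟩ := h₁.exists_shorter_of_not_nodup hnd
    have := hmin u l l₂ ⟨⟨x, hx, hl⟩, y, hy, h₂⟩
    omega
  have hnd₂ : (u :: l₂).Nodup := by
    by_contra hnd
    obtain ⟨l, hl, hlt⟩ := h₂.exists_shorter_of_not_nodup hnd
    have := hmin u l₁ l ⟨⟨x, hx, h₁⟩, y, hy, hl⟩
    omega
  have hdisj : ∀ z ∈ l₁, z ∉ l₂ := by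
    intro z hz₁ hz₂
    obtain ⟨t₁, ht₁, hlt₁⟩ := h₁.exists_suffix_of_mem hz₁
    obtain ⟨t₂, ht₂, hlt₂⟩ := h₂.exists_suffix_of_mem hz₂
    have := hmin z t₁ t₂ ⟨⟨x, hx, ht₁⟩, y, hy, ht₂⟩
    omega
  rw [List.nodup_cons] at hnd₁ hnd₂ ⊢
  refine ⟨by simp [hnd₁.1, hnd₂.1], List.nodup_append.2 ⟨hnd₁.2, hnd₂.2, ?_⟩⟩
  rintro z hz _ hz' rfl
  exact hdisj z hz hz'

theorem IsMinFork.notMem (h : IsMinFork r X Y u l₁ l₂) :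
    ∀ z ∈ l₁ ++ (u :: l₂).dropLast, z ∉ Y := by
  obtain ⟨⟨⟨x, hx, h₁⟩, y, hy, h₂⟩, hmin⟩ := h
  intro z hz hzY
  rcases List.mem_append.1 hz with hz | hz
  · obtain ⟨t, ht, hlt⟩ := h₁.exists_suffix_of_mem hz
    have := hmin z t [] ⟨⟨x, hx, ht⟩, z, hzY, rfl⟩
    simp at this
    omega
  · obtain ⟨t, ht, hlt⟩ := h₂.exists_prefix_of_mem_dropLast hz
    have := hmin u l₁ t ⟨⟨x, hx, h₁⟩, z, hzY, ht⟩
    omega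

end Forks

theorem IsMinFork.notMem_of_compl {A : V → V → Prop} {X W : Set V} {i u : V} {l₁ l₂ : List V}
    (h : IsMinFork (StepIn A {i}ᶜ) X (W \ {i}) u l₁ l₂) (hu : u ≠ i) :
    ∀ z ∈ l₁ ++ (u :: l₂).dropLast, z ∉ W := by
  obtain ⟨⟨_, -, h₁⟩, _, -, h₂⟩ := h.isFork
  intro z hz hzW
  refine h.notMem z hz ⟨hzW, ?_⟩
  rcases List.mem_append.1 hz with hz | hz
  exacts [h₁.mem_of_mem hu (List.mem_cons_of_mem _ hz),
    h₂.mem_of_mem hu (List.mem_of_mem_dropLast hz)]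

/-- Reversing the arcs, this is a minimal fork from `a` to `p` and `q`. -/
theorem exists_isWalk_meeting {r : V → V → Prop} {p q a : V} (hp : ReflTransGen r p a)
    (hq : ReflTransGen r q a) :
    ∃ c δ m, IsWalk r p δ c ∧ IsWalk r q m c ∧ (p :: δ ++ (q :: m).dropLast).Nodup := by
  obtain ⟨l₁, h₁⟩ := exists_isWalk_of_reflTransGen (reflTransGen_swap.2 hp)
  obtain ⟨l₂, h₂⟩ := exists_isWalk_of_reflTransGen (reflTransGen_swap.2 hq)
  obtain ⟨c, l₁, l₂, hmin⟩ :=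
    IsFork.exists_isMinFork (X := {p}) (Y := {q}) ⟨⟨p, rfl, h₁⟩, q, rfl, h₂⟩
  obtain ⟨⟨_, rfl, hc₁⟩, _, rfl, hc₂⟩ := hmin.isFork
  refine ⟨c, _, _, hc₁.reverse, hc₂.reverse, ?_⟩
  rw [hc₁.cons_reverse_tail, hc₂.cons_reverse_tail, List.dropLast_reverse, List.tail_cons,
    ← List.reverse_append, List.nodup_reverse, List.nodup_middle, List.nodup_cons,
    List.nodup_append_comm, List.mem_append, or_comm, ← List.mem_append, ← List.nodup_cons]
  exact hmin.nodup

/-- The cycle `u → j → i → c ← w ← u`: its vertices outside `W` are those of the fork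
`j ← u → w` but `w`, those inside `W` the ones of the paths `i → c ← w`. -/
theorem exists_directedSubBlock_of_fork_of_meeting {A : V → V → Prop} {W : Set V}
    {u j i w c : V} {l₁ l₂ δ m : List V}
    (h₁ : IsWalk A u l₁ j) (h₂ : IsWalk A u l₂ w) (hji : A j i)
    (hδ : IsWalk A i δ c) (hm : IsWalk A w m c)
    (hfork : (u :: (l₁ ++ l₂)).Nodup) (hforkW : ∀ z ∈ l₁ ++ (u :: l₂).dropLast, z ∉ W)
    (hmeet : (i :: δ ++ (w :: m).dropLast).Nodup)
    (hmeetW : ∀ z ∈ i :: δ ++ (w :: m).dropLast, z ∈ W)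
    (hiw : i ≠ w) (hlen : 1 ≤ l₁.length + l₂.length) :
    ∃ U, DirectedSubBlock A U ∧ l₁.length + l₂.length + 2 ≤ U.ncard := by
  classical
  have hQ : (u :: (l₂ ++ m)).reverse.tail = ((u :: l₂).dropLast ++ (w :: m).dropLast).reverse := by
    rw [List.tail_reverse, ← List.cons_append]
    conv_lhs => rw [h₂.cons_eq_dropLast_append]
    rw [List.append_assoc, List.singleton_append,
      List.dropLast_append_of_ne_nil (List.cons_ne_nil _ _)]
  set L := l₁ ++ i :: δ ++ (u :: (l₂ ++ m)).reverse.tail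
  have hperm : L.Perm ((l₁ ++ (u :: l₂).dropLast) ++ (i :: δ ++ (w :: m).dropLast)) :=
    List.perm_iff_count.2 fun z => by
      simp only [L, hQ, List.count_append, List.count_reverse]
      omega
  have hout : (l₁ ++ (u :: l₂).dropLast).Nodup :=
    ((List.dropLast_sublist _).append_left l₁).nodup (List.perm_middle.nodup_iff.2 hfork)
  have hnd : L.Nodup := hperm.nodup_iff.2 <| List.nodup_append.2
    ⟨hout, hmeet, fun z hz _ hz' h => hforkW z hz (h ▸ hmeetW _ hz')⟩
  have hδm : 1 ≤ δ.length + m.length := by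
    rcases δ with _ | _
    · rcases m with _ | _
      · exact absurd (hδ.trans hm.symm) hiw
      · simp only [List.length_cons]; omega
    · simp only [List.length_cons]; omega
  have hLlen : L.length = l₁.length + l₂.length + 1 + δ.length + m.length := by
    simp only [L, hQ, List.length_append, List.length_reverse, List.length_dropLast,
      List.length_cons]
    omega
  refine ⟨{z | z ∈ L}, directedSubBlock_of_isWalk (h₁.append (isWalk_cons.2 ⟨hji, hδ⟩))
    (h₂.append hm) (by simp) hnd (by show 3 ≤ L.length; omega), ?_⟩
  rw [ncard_setOf_mem hnd]
  omega

theorem CyclePart.lt_length_add {A : V → V → Prop} {X Y : Set V} {i u : V} {x : ℕ}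
    {l₁ l₂ : List V} (h : CyclePart A X Y i x) (hf : IsFork (StepIn A {i}ᶜ) X Y u l₁ l₂)
    (hu : u ≠ i) : x < l₁.length + l₂.length := by
  obtain ⟨⟨a, ha, h₁⟩, b, hb, h₂⟩ := hf
  by_contra hle
  refine (Set.eq_empty_iff_forall_notMem.1 (h l₁.length (x - l₁.length) (by omega))) u ⟨?_, ?_⟩
  exacts [⟨a, ha, hu, h₁.stepsLe le_rfl⟩, ⟨b, hb, hu, h₂.stepsLe (by omega)⟩]

theorem exists_isFork_of_not_dynPart {A : V → V → Prop} {X Y Z : Set V}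
    (h : ¬ DynPart A X Y Z) : ∃ u l₁ l₂, IsFork (StepIn A Zᶜ) X Y u l₁ l₂ := by
  obtain ⟨u, ⟨x, hx, -, hux⟩, y, hy, -, huy⟩ := Set.nonempty_iff_ne_empty.2 h
  obtain ⟨l₁, h₁⟩ := exists_isWalk_of_reflTransGen hux
  obtain ⟨l₂, h₂⟩ := exists_isWalk_of_reflTransGen huy
  exact ⟨u, l₁, l₂, ⟨x, hx, h₁⟩, y, hy, h₂⟩

theorem stmt13_general (A : V → V → Prop) (n : ℕ)
    (hblocks : ∀ U : Set V, DirectedSubBlock A U → U.ncard ≤ n)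
    (x : ℕ) (hx : n - 2 ≤ x)
    (W : Set V)
    (hreach : ∃ a ∈ W, ∀ b ∈ W, ReachIn A W b a)
    (i : V) (hiW : i ∈ W) (j : V) (hji : A j i)
    (hcp : CyclePart A {j} (W \ {i}) i x) :
    DynPart A {j} (W \ {i}) {i} := by
  by_contra hdp
  obtain ⟨u, l₁, l₂, hf⟩ := exists_isFork_of_not_dynPart hdp
  obtain ⟨u, l₁, l₂, hmin⟩ := hf.exists_isMinFork
  obtain ⟨⟨_, rfl, h₁⟩, w, ⟨hwW, hwi⟩, h₂⟩ := hmin.isFork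
  have hui : u ≠ i := fun hui => h₂.mem_of_ne (fun huw => hwi (huw ▸ hui)) hui
  have hlen := hcp.lt_length_add hmin.isFork hui
  obtain ⟨a, -, ha⟩ := hreach
  obtain ⟨c, δ, m, hδ, hm, hmeet⟩ := exists_isWalk_meeting (ha i hiW).2 (ha w hwW).2
  have hmeetW : ∀ z ∈ i :: δ ++ (w :: m).dropLast, z ∈ W := by
    intro z hz
    rcases List.mem_append.1 hz with hz | hz
    exacts [hδ.mem_of_mem hiW hz, hm.mem_of_mem hwW (List.mem_of_mem_dropLast hz)]
  obtain ⟨U, hU, hcard⟩ := exists_directedSubBlock_of_fork_of_meeting h₁.of_stepIn h₂.of_stepIn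
    hji hδ.of_stepIn hm.of_stepIn hmin.nodup (hmin.notMem_of_compl hui) hmeet hmeetW
    (Ne.symm hwi) (by omega)
  have := hblocks U hU
  omega

/-- core step of Theorem B.1. -/
theorem stmt13 [Fintype V] (A : V → V → Prop) (hirr : ∀ v : V, ¬ A v v)
    (n : ℕ) (hn : 3 ≤ n)
    (hblocks : ∀ U : Set V, DirectedSubBlock A U → U.ncard ≤ n)
    (x : ℕ) (hx : n - 2 ≤ x)
    (W : Set V) (hWcard : 2 ≤ W.ncard)
    (hreach : ∃ a ∈ W, ∀ b ∈ W, ReachIn A W b a)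
    (i : V) (hiW : i ∈ W) (j : V) (hjW : j ∉ W) (hji : A j i)
    (hcp : CyclePart A {j} (W \ {i}) i x) :
    DynPart A {j} (W \ {i}) {i} :=
  stmt13_general A n hblocks x hx W hreach i hiW j hji hcp
end
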